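/- arXiv:2504.08561 — 4 statements merged into one kernel-verified Lean document; each statement's English description precedes it below -/
import Mathlib

section
/- Let c < d be real numbers and f ∈ L¹[c,d]. Then ∫_c^d e^{iρ(t−c)} f(t) dt = o(e^{|Im ρ|(d−c)}) as the complex number ρ tends to infinity; that is, for every ε > 0 there exists R > 0 such that for all complex ρ with |ρ| > R, |∫_c^d e^{iρ(t−c)} f(t) dt| ≤ ε · e^{|Im ρ|(d−c)}. -/
/-!
On `[c, d]` the kernel `exp (I * ρ * (t - c))` has modulus at most `exp (|Im ρ| (d - c))`, so
after dividing by this factor the integral is an `L¹`-continuous functional of `f`, uniformly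
in `ρ`. For a smooth `g`, integrating by parts against the primitive
`exp (I * ρ * (t - c)) / (I * ρ)` gains a factor `1 / ‖ρ‖`; since smooth functions are dense
in `L¹`, the claim follows by an `ε / 2` argument.
-/

open MeasureTheory Complex

open scoped Interval ContDiff

theorem IntervalIntegrable.exists_contDiff_integral_norm_sub_le {E : Type*}
    [NormedAddCommGroup E] [NormedSpace ℝ E] {f : ℝ → E} {a b : ℝ}
    (hf : IntervalIntegrable f volume a b) {η : ℝ} (hη : 0 < η) :
    ∃ g : ℝ → E, ContDiff ℝ ∞ g ∧ ∫ t in Ι a b, ‖f t - g t‖ ≤ η := by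
  have hf₁ : MemLp f 1 (volume.restrict (Ι a b)) := memLp_one_iff_integrable.2 hf.def'
  obtain ⟨g, -, hg, hfg⟩ := hf₁.exist_eLpNorm_sub_le ENNReal.one_ne_top le_rfl hη
  refine ⟨g, hg, ?_⟩
  have hfg' := ENNReal.toReal_le_of_le_ofReal hη.le hfg
  rwa [eLpNorm_one_eq_lintegral_enorm,
    ← integral_norm_eq_lintegral_enorm (hf₁.1.sub hg.continuous.aestronglyMeasurable)] at hfg'

section
variable {c d : ℝ}

theorem norm_cexp_I_mul_sub_le (ρ : ℂ) {t : ℝ} (ht : t ∈ Set.Icc c d) :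
    ‖exp (I * ρ * (t - c))‖ ≤ Real.exp (|ρ.im| * (d - c)) := by
  have hre : (I * ρ * (t - c)).re = -ρ.im * (t - c) := by simp
  rw [norm_exp, hre, Real.exp_le_exp]
  calc -ρ.im * (t - c) ≤ |ρ.im| * (t - c) := by gcongr; linarith [ht.1]; exact neg_le_abs _
    _ ≤ |ρ.im| * (d - c) := by gcongr; exact ht.2

theorem norm_integral_cexp_mul_le_integral_norm (hcd : c ≤ d) (ρ : ℂ) {f : ℝ → ℂ}
    (hf : IntervalIntegrable f volume c d) :
    ‖∫ t in c..d, exp (I * ρ * (t - c)) * f t‖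
      ≤ Real.exp (|ρ.im| * (d - c)) * ∫ t in Ι c d, ‖f t‖ := by
  rw [intervalIntegral.norm_integral_eq_norm_integral_uIoc, ← integral_const_mul]
  refine norm_integral_le_of_norm_le (hf.def'.norm.const_mul _) ?_
  refine ae_restrict_of_forall_mem measurableSet_uIoc fun t ht => ?_
  rw [Set.uIoc_of_le hcd] at ht
  rw [norm_mul]
  gcongr
  exact norm_cexp_I_mul_sub_le ρ (Set.Ioc_subset_Icc_self ht)

theorem norm_integral_cexp_mul_le_div_of_hasDerivAt (hcd : c ≤ d) {ρ : ℂ} (hρ : ρ ≠ 0)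
    {g g' : ℝ → ℂ} (hg : ∀ t ∈ [[c, d]], HasDerivAt g (g' t) t)
    (hg' : IntervalIntegrable g' volume c d) :
    ‖∫ t in c..d, exp (I * ρ * (t - c)) * g t‖
      ≤ Real.exp (|ρ.im| * (d - c)) * (‖g c‖ + ‖g d‖ + ∫ t in c..d, ‖g' t‖)
        / ‖ρ‖ := by
  set M := Real.exp (|ρ.im| * (d - c))
  set E : ℝ → ℂ := fun t => exp (I * ρ * (t - c))
  have hIρ : I * ρ ≠ 0 := mul_ne_zero I_ne_zero hρ
  have hE : ∀ t, HasDerivAt (fun t => E t / (I * ρ)) (E t) t := by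
    intro t
    have := (((hasDerivAt_id (t : ℂ)).sub_const (c : ℂ)).const_mul (I * ρ)).cexp.comp_ofReal
    exact (this.div_const _).congr_deriv (by simp [E, hIρ])
  have hEbound : ∀ t ∈ Set.Icc c d, ‖E t / (I * ρ)‖ ≤ M / ‖ρ‖ := by
    intro t ht
    rw [norm_div, norm_mul, norm_I, one_mul]
    gcongr
    exact norm_cexp_I_mul_sub_le ρ ht
  have hparts := intervalIntegral.integral_mul_deriv_eq_deriv_mul hg (fun t _ => hE t) hg'
    (Continuous.intervalIntegrable (by fun_prop) _ _)
  have hrem :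
      ‖∫ t in c..d, g' t * (E t / (I * ρ))‖ ≤ M / ‖ρ‖ * ∫ t in c..d, ‖g' t‖ := by
    rw [← intervalIntegral.integral_const_mul]
    refine intervalIntegral.norm_integral_le_of_norm_le hcd ?_ (hg'.norm.const_mul _)
    refine ae_of_all _ fun t ht => ?_
    rw [norm_mul, mul_comm]
    gcongr
    exact hEbound t (Set.Ioc_subset_Icc_self ht)
  have hend : ∀ t ∈ Set.Icc c d, ‖g t * (E t / (I * ρ))‖ ≤ M / ‖ρ‖ * ‖g t‖ := by
    intro t ht
    rw [norm_mul, mul_comm]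
    gcongr
    exact hEbound t ht
  calc ‖∫ t in c..d, E t * g t‖ = ‖∫ t in c..d, g t * E t‖ := by simp only [mul_comm]
    _ ≤ ‖g d * (E d / (I * ρ))‖ + ‖g c * (E c / (I * ρ))‖
          + ‖∫ t in c..d, g' t * (E t / (I * ρ))‖ := by
        rw [hparts]
        exact (norm_sub_le _ _).trans (by gcongr; exact norm_sub_le _ _)
    _ ≤ M / ‖ρ‖ * ‖g d‖ + M / ‖ρ‖ * ‖g c‖ + M / ‖ρ‖ * ∫ t in c..d, ‖g' t‖ :=
        add_le_add (add_le_add (hend d (Set.right_mem_Icc.2 hcd)) (hend c (Set.left_mem_Icc.2 hcd)))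
          hrem
    _ = M * (‖g c‖ + ‖g d‖ + ∫ t in c..d, ‖g' t‖) / ‖ρ‖ := by ring

end

theorem riemann_lebesgue_left (c d : ℝ) (hcd : c < d) (f : ℝ → ℂ)
    (hf : IntervalIntegrable f volume c d) :
    ∀ ε > 0, ∃ R > 0, ∀ ρ : ℂ, R < ‖ρ‖ →
      ‖∫ t in c..d, Complex.exp (Complex.I * ρ * ((t : ℂ) - c)) * f t‖
        ≤ ε * Real.exp (|ρ.im| * (d - c)) := by
  intro ε hε
  obtain ⟨g, hg, hfg⟩ := hf.exists_contDiff_integral_norm_sub_le (half_pos hε)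
  have hg_int : IntervalIntegrable g volume c d := hg.continuous.intervalIntegrable _ _
  set K := ‖g c‖ + ‖g d‖ + ∫ t in c..d, ‖deriv g t‖
  refine ⟨max (2 * K / ε) 1, lt_max_of_lt_right one_pos, fun ρ hρ => ?_⟩
  have hρ_pos : 0 < ‖ρ‖ := one_pos.trans ((le_max_right _ _).trans_lt hρ)
  have hKρ : K / ‖ρ‖ ≤ ε / 2 := by
    have := (le_max_left _ _).trans_lt hρ
    rw [div_lt_iff₀ hε] at this
    rw [div_le_iff₀ hρ_pos]
    linarith
  set M := Real.exp (|ρ.im| * (d - c))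
  have hE : Continuous fun t : ℝ => exp (I * ρ * (t - c)) := by fun_prop
  have hsplit : ∫ t in c..d, exp (I * ρ * (t - c)) * f t
      = (∫ t in c..d, exp (I * ρ * (t - c)) * (f t - g t))
        + ∫ t in c..d, exp (I * ρ * (t - c)) * g t := by
    rw [← intervalIntegral.integral_add ((hf.sub hg_int).continuousOn_mul hE.continuousOn)
      (hg_int.continuousOn_mul hE.continuousOn)]
    simp only [mul_sub, sub_add_cancel]
  have hsmooth := norm_integral_cexp_mul_le_div_of_hasDerivAt hcd.le (norm_pos_iff.1 hρ_pos)
    (fun t _ => (hg.differentiable (by simp) t).hasDerivAt)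
    ((hg.continuous_deriv (by simp)).intervalIntegrable _ _)
  have hrough := norm_integral_cexp_mul_le_integral_norm hcd.le ρ (hf.sub hg_int)
  calc _ ≤ ‖∫ t in c..d, exp (I * ρ * (t - c)) * (f t - g t)‖
        + ‖∫ t in c..d, exp (I * ρ * (t - c)) * g t‖ := hsplit ▸ norm_add_le _ _
    _ ≤ M * (ε / 2) + M * K / ‖ρ‖ :=
        add_le_add (hrough.trans (by gcongr)) hsmooth
    _ ≤ M * (ε / 2) + M * (ε / 2) := by rw [mul_div_assoc]; gcongr
    _ = ε * M := by ring
end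

section
/- Let 0 < a < b < π, T = min{a, b−a, π−b}, G : ℝ → ℂ even and supported in [−T,T], s(t) = G(b−t), r(t) = −G(a−t). Define W₀(t; p, q) = −p(t+a−π) − p(π−t+a) + p(π−a+t) + p(π−a−t) − q(t+b−π) − q(π−t+b) + q(π−b+t) + q(π−b−t) and W₁(t; p, q) = p(t+a−π) + p(π−t+a) − p(π−a+t) + p(π−a−t) + q(t+b−π) + q(π−t+b) − q(π−b+t) + q(π−b−t), for t ∈ [0, π]. Then W₀(t; s, r) = 0 and W₁(t; s, r) = 0 for all t ∈ [0, π]. -/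
open Real

theorem W_vanishes (a b : ℝ) (ha : 0 < a) (hab : a < b) (hb : b < π)
    (G : ℝ → ℂ) (hGeven : ∀ x, G (-x) = G x)
    (hGsupp : ∀ x, |x| > min a (min (b - a) (π - b)) → G x = 0)
    (s r : ℝ → ℂ) (hs : ∀ t, s t = G (b - t)) (hr : ∀ t, r t = -G (a - t)) :
    ∀ t ∈ Set.Icc (0:ℝ) π,
      (-s (t + a - π) - s (π - t + a) + s (π - a + t) + s (π - a - t)
        - r (t + b - π) - r (π - t + b) + r (π - b + t) + r (π - b - t) = 0)
      ∧ (s (t + a - π) + s (π - t + a) - s (π - a + t) + s (π - a - t)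
        + r (t + b - π) + r (π - t + b) - r (π - b + t) + r (π - b - t) = 0) := by
  intro t _
  simp only [hs, hr]
  have h1 : G (b - (t + a - π)) = G (a - (π - t + b)) := by
    rw [show b - (t + a - π) = -(a - (π - t + b)) by ring]; exact hGeven _
  have h2 : G (b - (π - t + a)) = G (a - (t + b - π)) := by
    rw [show b - (π - t + a) = -(a - (t + b - π)) by ring]; exact hGeven _
  have h3 : G (b - (π - a + t)) = G (a - (π - b + t)) := by congr 1; ring
  have h4 : G (b - (π - a - t)) = G (a - (π - b - t)) := by congr 1; ring
  constructor <;> (rw [h1, h2, h3, h4]; ring)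
end

section
/- Let 0 < a < b < π and let p̂, q̂ : ℝ → ℂ vanish outside (0, π) and satisfy: (i) p̂ = q̂ = 0 on [0, b]; (ii) p̂(z) + q̂(z + a − b) = 0 for all z ∈ [0, π]; (iii) p̂(z + a − b) + q̂(z) = 0 for all z ∈ [b, π]. Then p̂ = 0 and q̂ = 0 on [0, π]. -/
open Real

theorem uniqueness_induction (a b : ℝ) (ha : 0 < a) (hab : a < b) (hb : b < π)
    (phat qhat : ℝ → ℂ)
    (hout : ∀ z, z ∉ Set.Ioo (0:ℝ) π → phat z = 0 ∧ qhat z = 0)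
    (h0b : ∀ z ∈ Set.Icc (0:ℝ) b, phat z = 0 ∧ qhat z = 0)
    (h1 : ∀ z ∈ Set.Icc (0:ℝ) π, phat z + qhat (z + a - b) = 0)
    (h2 : ∀ z ∈ Set.Icc b π, phat (z + a - b) + qhat z = 0) :
    ∀ z ∈ Set.Icc (0:ℝ) π, phat z = 0 ∧ qhat z = 0 := by
  have hba : 0 < b - a := by linarith
  have key : ∀ n : ℕ, ∀ z ∈ Set.Icc (0:ℝ) π, z ≤ b + n * (b - a) →
      phat z = 0 ∧ qhat z = 0 := by
    intro n
    induction n with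
    | zero =>
      intro z hz hle
      exact h0b z ⟨hz.1, by simpa using hle⟩
    | succ n ih =>
      intro z hz hle
      rcases le_or_gt z b with hzb | hzb
      · exact h0b z ⟨hz.1, hzb⟩
      · have hz' : z + a - b ∈ Set.Icc (0:ℝ) π := by
          constructor <;> [linarith [hz.1]; linarith [hz.2]]
        have hle' : z + a - b ≤ b + n * (b - a) := by
          push_cast at hle ⊢; linarith
        obtain ⟨hp', hq'⟩ := ih _ hz' hle'
        have e1 := h1 z hz
        have e2 := h2 z ⟨le_of_lt hzb, hz.2⟩
        rw [hq'] at e1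
        rw [hp'] at e2
        constructor <;> [linear_combination e1; linear_combination e2]
  intro z hz
  obtain ⟨n, hn⟩ := exists_nat_ge ((π - b) / (b - a))
  apply key n z hz
  have : π - b ≤ n * (b - a) := by
    calc π - b = ((π - b) / (b - a)) * (b - a) := by field_simp
    _ ≤ n * (b - a) := by nlinarith
  linarith [hz.2]
end

section
/- Let 0 < a < b < π and suppose functions p̂, q̂ : ℝ → ℂ vanish outside (0, π), vanish on [0, b], and satisfy p̂(π − a − t) + q̂(π − b − t) = 0 for all t ∈ [0, π], and −p̂(t+a−π) − p̂(π−t+a) + p̂(π−a+t) − q̂(t+b−π) − q̂(π−t+b) + q̂(π−b+t) = 0 for all t ∈ [0, π]. Then p̂(z) + q̂(z + a − b) = 0 for all z ∈ [0, π]. -/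
open Real

theorem extend_identity (a b : ℝ) (ha : 0 < a) (hab : a < b) (hb : b < π)
    (phat qhat : ℝ → ℂ)
    (hout : ∀ z, z ∉ Set.Ioo (0:ℝ) π → phat z = 0 ∧ qhat z = 0)
    (h0b : ∀ z ∈ Set.Icc (0:ℝ) b, phat z = 0 ∧ qhat z = 0)
    (h1 : ∀ t ∈ Set.Icc (0:ℝ) π, phat (π - a - t) + qhat (π - b - t) = 0)
    (h2 : ∀ t ∈ Set.Icc (0:ℝ) π,
      -phat (t + a - π) - phat (π - t + a) + phat (π - a + t)
        - qhat (t + b - π) - qhat (π - t + b) + qhat (π - b + t) = 0) :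
    ∀ z ∈ Set.Icc (0:ℝ) π, phat z + qhat (z + a - b) = 0 := by
  -- auxiliary: anything ≤ b vanishes
  have hle : ∀ x : ℝ, x ≤ b → phat x = 0 ∧ qhat x = 0 := by
    intro x hx
    rcases le_or_gt x 0 with h | h
    · exact hout x (by simp [Set.mem_Ioo]; intro h'; linarith)
    · exact h0b x ⟨le_of_lt h, hx⟩
  have hge : ∀ x : ℝ, π ≤ x → phat x = 0 ∧ qhat x = 0 := by
    intro x hx
    exact hout x (by simp [Set.mem_Ioo]; intro h'; linarith)
  intro z ⟨hz0, hzπ⟩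
  rcases le_or_gt z (π - a) with hza | hza
  · have := h1 (π - a - z) ⟨by linarith, by linarith⟩
    have e1 : π - a - (π - a - z) = z := by ring
    have e2 : π - b - (π - a - z) = z + a - b := by ring
    rw [e1, e2] at this
    exact this
  · have ht : z + a - π ∈ Set.Icc (0:ℝ) π := ⟨by linarith, by linarith⟩
    have := h2 (z + a - π) ht
    have p1 : phat (z + a - π + a - π) = 0 := (hle _ (by linarith)).1
    have p2 : phat (π - (z + a - π) + a) = 0 := (hge _ (by linarith)).1
    have q1 : qhat (z + a - π + b - π) = 0 := (hle _ (by linarith)).2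
    have q2 : qhat (π - (z + a - π) + b) = 0 := (hge _ (by linarith)).2
    rw [p1, p2, q1, q2] at this
    have e1 : π - a + (z + a - π) = z := by ring
    have e2 : π - b + (z + a - π) = z + a - b := by ring
    rw [e1, e2] at this
    linear_combination this
end
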